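/- arXiv:2401.00801 — 2 statements merged into one kernel-verified Lean document; each statement's English description precedes it below -/
import Mathlib

section
/- Let ε ∈ (0,1) and let f(ε) := 1 + Σ_{k=1}^{∞} ((Π_{m=1}^{k}(m − 1/2))/(k+1)!)·ε^k (the series for d = 2). Then the bracketing number of the family C_2 of anchored boxes in [0,1]^2 satisfies N_[](ε, C_2, ‖·‖_{L¹}) ≤ 2·((ε^{−1} − 1)/f(ε) + 3/2)·((ε^{−1} − 1)/f(ε) + 1). -/
open Finset

/-- `B` is an `ε`-bracketing cover of the family `C_d` of anchored boxes in `[0,1]^d`: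
a finite set of pairs `(a, b)` of points of `[0,1]^d` with `a ≤ b` componentwise and
`∏ b_j - ∏ a_j ≤ ε` (i.e. the bracket `[1_{[0,a)}, 1_{[0,b)}]` has `L¹`-weight at most
`ε`), such that every anchored box `[0,x)` with `x ∈ [0,1]^d` satisfies
`a ≤ x ≤ b` componentwise for some `(a, b) ∈ B`. -/
def IsBracketingCoverC (d : ℕ) (ε : ℝ)
    (B : Finset ((Fin d → ℝ) × (Fin d → ℝ))) : Prop :=
  (∀ p ∈ B, p.1 ∈ Set.Icc (0 : Fin d → ℝ) 1 ∧ p.2 ∈ Set.Icc (0 : Fin d → ℝ) 1 ∧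
    p.1 ≤ p.2 ∧ (∏ j, p.2 j) - ∏ j, p.1 j ≤ ε) ∧
  ∀ x ∈ Set.Icc (0 : Fin d → ℝ) 1, ∃ p ∈ B, p.1 ≤ x ∧ x ≤ p.2

/-- The bracketing number `N_[](ε, C_d, ‖·‖_{L¹})` of the family of anchored boxes:
the minimal cardinality of an `ε`-bracketing cover of `C_d`. -/
noncomputable def bracketingNumberC (d : ℕ) (ε : ℝ) : ℕ :=
  sInf { n : ℕ | ∃ B : Finset ((Fin d → ℝ) × (Fin d → ℝ)),
    IsBracketingCoverC d ε B ∧ B.card = n }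

/-!
Split `[0,1]²` into horizontal layers `T ν ≤ y ≤ T (ν + 1)` with `0 = T 0 < ⋯ < T K = 1`. The
bottom layer is the single bracket `[(0,0), (1, T 1)]`, of weight `T 1 ≤ ε`. On a layer
`T ≤ y ≤ T'` the brackets `[(u (i+1), T), (u i, T')]` all have weight `ε` when
`u i T' - u (i+1) T = ε` and `u 0 = 1`, i.e. `u i = c - (c - 1) (T'/T)^i` with `c = ε/(T' - T)`;
`m` of them cover the layer once `u m ≤ 0`, i.e. `ε ≤ (T'/T)^m (ε - (T' - T))`. With `ν + 1`
brackets on layer `ν`, `K` layers cost `K (K + 1) / 2` brackets, which is the claimed bound at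
`(ε⁻¹ - 1)/f = (K - 2)/2`. For the uniform partition `T ν = ν/K` the condition holds as soon as
`K ≥ 8/(5ε)`, because `(1 + 1/ν)^(ν+1) ≥ e > 8/3`, and for `ε ≤ 1/4` such a `K` is at most
`2 (ε⁻¹ - 1)/f + 2` even with `f` replaced by `1 + ε/4 + ε²/(8(1-ε))` (the coefficients of `f`
decrease from `1/4`). Larger `ε` are handled by explicit partitions and one cover by four brackets.
-/

section Brackets

variable {d : ℕ}

def IsBracket (ε : ℝ) (p : (Fin d → ℝ) × (Fin d → ℝ)) : Prop :=
  p.1 ∈ Set.Icc (0 : Fin d → ℝ) 1 ∧ p.2 ∈ Set.Icc (0 : Fin d → ℝ) 1 ∧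
    p.1 ≤ p.2 ∧ (∏ j, p.2 j) - ∏ j, p.1 j ≤ ε

def IsBracketCoverOn (ε : ℝ) (B : Finset ((Fin d → ℝ) × (Fin d → ℝ)))
    (S : Set (Fin d → ℝ)) : Prop :=
  (∀ p ∈ B, IsBracket ε p) ∧ ∀ x ∈ S, ∃ p ∈ B, p.1 ≤ x ∧ x ≤ p.2

theorem bracketingNumberC_le_card {ε : ℝ} {B : Finset ((Fin d → ℝ) × (Fin d → ℝ))}
    (hB : IsBracketCoverOn ε B (Set.Icc 0 1)) : bracketingNumberC d ε ≤ B.card :=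
  Nat.sInf_le ⟨B, hB, rfl⟩

theorem IsBracketCoverOn.mono {ε : ℝ} {B : Finset ((Fin d → ℝ) × (Fin d → ℝ))}
    {S S' : Set (Fin d → ℝ)} (hB : IsBracketCoverOn ε B S) (hS : S' ⊆ S) :
    IsBracketCoverOn ε B S' :=
  ⟨hB.1, fun x hx => hB.2 x (hS hx)⟩

theorem IsBracketCoverOn.biUnion {ι : Type*} [DecidableEq ((Fin d → ℝ) × (Fin d → ℝ))]
    {ε : ℝ} {s : Finset ι} {B : ι → Finset ((Fin d → ℝ) × (Fin d → ℝ))}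
    {S : ι → Set (Fin d → ℝ)} (hB : ∀ i ∈ s, IsBracketCoverOn ε (B i) (S i)) :
    IsBracketCoverOn ε (s.biUnion B) (⋃ i ∈ s, S i) := by
  refine ⟨fun p hp => ?_, fun x hx => ?_⟩
  · obtain ⟨i, hi, hp⟩ := mem_biUnion.1 hp
    exact (hB i hi).1 p hp
  · obtain ⟨i, hi, hx⟩ := Set.mem_iUnion₂.1 hx
    obtain ⟨p, hp, hpx⟩ := (hB i hi).2 x hx
    exact ⟨p, mem_biUnion.2 ⟨i, hi, hp⟩, hpx⟩

end Brackets

theorem exists_mem_Icc_apply_succ {α : Type*} [LinearOrder α] {T : ℕ → α} {y : α}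
    (h₀ : T 0 ≤ y) : ∀ {n : ℕ}, y ≤ T (n + 1) → ∃ i ≤ n, y ∈ Set.Icc (T i) (T (i + 1))
  | 0, h => ⟨0, le_rfl, h₀, h⟩
  | n + 1, h => by
    rcases le_total (T (n + 1)) y with h' | h'
    · exact ⟨n + 1, le_rfl, h', h⟩
    · obtain ⟨i, hi, hTi⟩ := exists_mem_Icc_apply_succ h₀ h'
      exact ⟨i, hi.trans n.le_succ, hTi⟩

theorem vecCons_two_le_iff {a b : ℝ} {x : Fin 2 → ℝ} : ![a, b] ≤ x ↔ a ≤ x 0 ∧ b ≤ x 1 := by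
  simp [Pi.le_def, Fin.forall_fin_two]

theorem le_vecCons_two_iff {a b : ℝ} {x : Fin 2 → ℝ} : x ≤ ![a, b] ↔ x 0 ≤ a ∧ x 1 ≤ b := by
  simp [Pi.le_def, Fin.forall_fin_two]

theorem isBracket_vecCons_two {ε a₁ a₂ b₁ b₂ : ℝ} (ha₁ : 0 ≤ a₁) (ha₂ : 0 ≤ a₂)
    (h₁ : a₁ ≤ b₁) (h₂ : a₂ ≤ b₂) (hb₁ : b₁ ≤ 1) (hb₂ : b₂ ≤ 1)
    (hw : b₁ * b₂ - a₁ * a₂ ≤ ε) : IsBracket ε (![a₁, a₂], ![b₁, b₂]) := by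
  simp only [IsBracket, Set.mem_Icc, Pi.le_def, Fin.forall_fin_two, Fin.prod_univ_two,
    Matrix.cons_val_zero, Matrix.cons_val_one, Pi.zero_apply, Pi.one_apply]
  constructorm* _ ∧ _ <;> linarith

def strip (a b : ℝ) : Set (Fin 2 → ℝ) := {x | x ∈ Set.Icc 0 1 ∧ a ≤ x 1 ∧ x 1 ≤ b}

theorem isBracketCoverOn_strip {ε T T' : ℝ} {m : ℕ} {v : ℕ → ℝ} (hT : 0 ≤ T) (hTT' : T ≤ T')
    (hT' : T' ≤ 1) (hv : Antitone v) (hv₀ : v 0 = 1) (hvm : v m = 0) (hv_nonneg : ∀ i, 0 ≤ v i)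
    (hweight : ∀ i < m, v i * T' - v (i + 1) * T ≤ ε) :
    IsBracketCoverOn ε ((range m).image fun i => (![v (i + 1), T], ![v i, T'])) (strip T T') := by
  refine ⟨fun p hp => ?_, ?_⟩
  · obtain ⟨i, hi, rfl⟩ := mem_image.1 hp
    exact isBracket_vecCons_two (hv_nonneg _) hT (hv i.le_succ) hTT' (hv₀ ▸ hv i.zero_le) hT'
      (hweight i (mem_range.1 hi))
  · rintro x ⟨hx, hTx, hxT'⟩
    obtain ⟨n, rfl⟩ : ∃ n, m = n + 1 :=
      Nat.exists_eq_succ_of_ne_zero fun hm => by simp [hm, hv₀] at hvm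
    obtain ⟨i, hi, hvi, hiv⟩ := exists_mem_Icc_apply_succ (α := ℝᵒᵈ) (T := v) (y := x 0)
      (show x 0 ≤ v 0 from hv₀ ▸ hx.2 0) (show v (n + 1) ≤ x 0 from hvm ▸ hx.1 0)
    exact ⟨_, mem_image_of_mem _ (mem_range.2 (Nat.lt_succ_of_le hi)),
      vecCons_two_le_iff.2 ⟨hiv, hTx⟩, le_vecCons_two_iff.2 ⟨hvi, hxT'⟩⟩

theorem exists_isBracketCoverOn_strip {ε T T' : ℝ} {m : ℕ} (hε : 0 ≤ ε) (hT : 0 < T)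
    (hTT' : T < T') (hT' : T' ≤ 1) (hm : ε ≤ (T' / T) ^ m * (ε - (T' - T))) :
    ∃ B : Finset ((Fin 2 → ℝ) × (Fin 2 → ℝ)), B.card ≤ m ∧ IsBracketCoverOn ε B (strip T T') := by
  set c := ε / (T' - T)
  set r := T' / T
  set u : ℕ → ℝ := fun i => c - (c - 1) * r ^ i
  have hh : 0 < T' - T := sub_pos.2 hTT'
  have hr : 1 ≤ r := (one_le_div hT).2 hTT'.le
  have hrT : r * T = T' := div_mul_cancel₀ _ hT.ne'
  have hch : c * (T' - T) = ε := div_mul_cancel₀ _ hh.ne'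
  have hc : 1 ≤ c := by
    rw [one_le_div hh]
    by_contra! h
    nlinarith [pow_pos (zero_lt_one.trans_le hr) m]
  have hu : Antitone u := fun i j hij => by
    simp only [u]
    nlinarith [pow_le_pow_right₀ hr hij]
  have hstep : ∀ i, u i * T' - u (i + 1) * T = ε := fun i => by
    simp only [u, pow_succ]
    linear_combination hch + (c - 1) * r ^ i * hrT
  have hum : u m ≤ 0 := by
    have : u m * (T' - T) = ε - r ^ m * (ε - (T' - T)) := by
      simp only [u]
      linear_combination hch - r ^ m * hch
    nlinarith
  refine ⟨_, card_image_le.trans (card_range m).le,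
    isBracketCoverOn_strip (v := fun i => max (u i) 0) hT.le hTT'.le hT'
      (fun i j hij => max_le_max (hu hij) le_rfl) (by simp [u]) (max_eq_right hum)
      (fun i => le_max_right _ _) fun i _ => ?_⟩
  rcases le_total 0 (u (i + 1)) with h | h
  · rw [max_eq_left h, max_eq_left (h.trans (hu i.le_succ)), hstep]
  · rw [max_eq_right h, zero_mul, sub_zero, max_mul_of_nonneg _ _ (hT.trans hTT').le]
    exact max_le (by nlinarith [hstep i]) (by simpa using hε)

noncomputable def bracketingBound (A : ℝ) : ℝ := 2 * (A + 3 / 2) * (A + 1)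

theorem bracketingBound_le_bracketingBound {w A : ℝ} (hw : -1 ≤ w) (hwA : w ≤ A) :
    bracketingBound w ≤ bracketingBound A := by
  unfold bracketingBound
  nlinarith

/-- `feasible` is the hypothesis of `exists_isBracketCoverOn_strip` for layer `ν` with
`ν + 1` brackets; `one_le` lets the bottom layer be a single bracket. -/
structure IsLayering (ε : ℝ) (K : ℕ) (T : ℕ → ℝ) : Prop where
  zero : T 0 = 0
  last : T K = 1
  lt_succ : ∀ ν < K, T ν < T (ν + 1)
  one_le : T 1 ≤ ε
  feasible : ∀ ν, 1 ≤ ν → ν < K → ε ≤ (T (ν + 1) / T ν) ^ (ν + 1) * (ε - (T (ν + 1) - T ν))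

namespace IsLayering

variable {ε : ℝ} {K : ℕ} {T : ℕ → ℝ}

theorem mono (hT : IsLayering ε K T) {i j : ℕ} (hij : i ≤ j) (hj : j ≤ K) : T i ≤ T j := by
  induction j, hij using Nat.le_induction with
  | base => rfl
  | succ j _ ih => exact (ih (by omega)).trans (hT.lt_succ j (by omega)).le

theorem pos (hT : IsLayering ε K T) {ν : ℕ} (h₁ : 1 ≤ ν) (hν : ν ≤ K) : 0 < T ν :=
  hT.zero ▸ (hT.lt_succ 0 (by omega)).trans_le (hT.mono h₁ hν)

theorem le_one (hT : IsLayering ε K T) {ν : ℕ} (hν : ν ≤ K) : T ν ≤ 1 :=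
  hT.last ▸ hT.mono hν le_rfl

theorem exists_isBracketCoverOn (hT : IsLayering ε K T) {ν : ℕ} (hν : ν < K) :
    ∃ B : Finset ((Fin 2 → ℝ) × (Fin 2 → ℝ)),
      B.card ≤ ν + 1 ∧ IsBracketCoverOn ε B (strip (T ν) (T (ν + 1))) := by
  rcases ν with _ | ν
  · refine ⟨_, card_image_le.trans (card_range 1).le,
      isBracketCoverOn_strip (m := 1) (v := fun i => if i = 0 then 1 else 0) hT.zero.ge
        (hT.lt_succ 0 hν).le (hT.le_one hν) ?_ rfl rfl (fun i => by positivity) ?_⟩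
    · intro i j hij
      dsimp only
      split_ifs <;> norm_num
      omega
    · simpa [hT.zero] using hT.one_le
  · exact exists_isBracketCoverOn_strip ((hT.pos le_rfl (by omega)).le.trans hT.one_le)
      (hT.pos (by omega) hν.le) (hT.lt_succ _ hν) (hT.le_one hν) (hT.feasible _ (by omega) hν)

theorem two_mul_bracketingNumberC_le (hT : IsLayering ε K T) :
    2 * bracketingNumberC 2 ε ≤ K * (K + 1) := by
  classical
  choose! B hBcard hB using fun ν (hν : ν < K) => hT.exists_isBracketCoverOn hν
  have hK : K ≠ 0 := by
    rintro rfl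
    simpa [hT.zero] using hT.last
  have hcover : IsBracketCoverOn ε ((range K).biUnion B) (Set.Icc 0 1) := by
    refine (IsBracketCoverOn.biUnion fun ν hν => hB ν (mem_range.1 hν)).mono fun x hx => ?_
    obtain ⟨ν, hν, hxν⟩ := exists_mem_Icc_apply_succ (T := T) (n := K - 1) (y := x 1)
      (hT.zero ▸ hx.1 1) (by rw [Nat.sub_add_cancel (by omega), hT.last]; exact hx.2 1)
    exact Set.mem_biUnion (mem_range.2 (by omega)) ⟨hx, hxν⟩
  calc 2 * bracketingNumberC 2 ε ≤ 2 * ∑ ν ∈ range K, (ν + 1) := by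
        gcongr
        exact (bracketingNumberC_le_card hcover).trans <| card_biUnion_le.trans <|
          sum_le_sum fun ν hν => hBcard ν (mem_range.1 hν)
    _ = K * (K + 1) := by
        have := sum_range_id_mul_two (K + 1)
        rw [sum_range_succ'] at this
        simp only [add_zero, Nat.add_sub_cancel] at this
        linarith

theorem bracketingNumberC_le (hT : IsLayering ε K T) {A : ℝ} (hA : ((K : ℝ) - 2) / 2 ≤ A) :
    (bracketingNumberC 2 ε : ℝ) ≤ bracketingBound A := by
  have hN : (2 * bracketingNumberC 2 ε : ℝ) ≤ K * (K + 1) := by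
    exact_mod_cast hT.two_mul_bracketingNumberC_le
  have hK : K * (K + 1) / 2 = bracketingBound (((K : ℝ) - 2) / 2) := by
    unfold bracketingBound
    ring
  calc (bracketingNumberC 2 ε : ℝ) ≤ K * (K + 1) / 2 := by linarith
    _ ≤ bracketingBound A :=
        hK ▸ bracketingBound_le_bracketingBound (by linarith [K.cast_nonneg' (α := ℝ)]) hA

end IsLayering

theorem exp_one_le_succ_div_pow {n : ℕ} (hn : n ≠ 0) :
    Real.exp 1 ≤ ((n + 1 : ℝ) / n) ^ (n + 1) := by
  have h := Real.one_sub_div_pow_le_exp_neg (n := n + 1) (t := 1) (by simp)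
  have hn' : (0 : ℝ) < n := by positivity
  rw [show 1 - 1 / ((n + 1 : ℕ) : ℝ) = ((n + 1 : ℝ) / n)⁻¹ by field_simp; push_cast; ring,
    inv_pow, Real.exp_neg] at h
  exact (inv_le_inv₀ (by positivity) (by positivity)).1 h

theorem isLayering_uniform {ε : ℝ} {K : ℕ} (hε : 0 < ε) (hK : 8 / (5 * ε) ≤ K) :
    IsLayering ε K fun ν => ν / K := by
  have hK₀ : (0 : ℝ) < K := (by positivity : (0 : ℝ) < 8 / (5 * ε)).trans_le hK
  have hKinv : (K : ℝ)⁻¹ ≤ 5 * ε / 8 := by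
    simpa using inv_anti₀ (by positivity) hK
  refine ⟨by simp, div_self hK₀.ne', fun ν _ => by gcongr; simp, by simpa using by linarith, ?_⟩
  intro ν hν _
  have hratio : ((ν + 1 : ℕ) : ℝ) / K / (ν / K) = (ν + 1) / ν := by
    have : (ν : ℝ) ≠ 0 := by positivity
    field_simp
    push_cast
    ring
  have hgap : ((ν + 1 : ℕ) : ℝ) / K - ν / K = (K : ℝ)⁻¹ := by
    push_cast
    ring
  rw [hratio, hgap]
  have he := exp_one_le_succ_div_pow (n := ν) (by omega)
  have he' := Real.exp_one_gt_d9
  nlinarith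

/-- Each partition is feasible for all `ε` above the stated bound, and the bounds are chosen below
the `ε` at which the previous, finer partition stops satisfying `(K - 2) / 2 ≤ lowerParam ε`. -/
theorem isLayering_six {ε : ℝ} (h : 1 / 4 ≤ ε) :
    IsLayering ε 6 (([0, 1 / 4, 2 / 5, 11 / 20, 7 / 10, 43 / 50] : List ℝ).getD · 1) where
  zero := rfl
  last := rfl
  lt_succ ν hν := by interval_cases ν <;> norm_num
  one_le := by norm_num; linarith
  feasible ν h₁ hν := by interval_cases ν <;> norm_num <;> nlinarith

theorem isLayering_five {ε : ℝ} (h : 31 / 100 ≤ ε) :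
    IsLayering ε 5 (([0, 31 / 100, 1 / 2, 69 / 100, 177 / 200] : List ℝ).getD · 1) where
  zero := rfl
  last := rfl
  lt_succ ν hν := by interval_cases ν <;> norm_num
  one_le := by norm_num; linarith
  feasible ν h₁ hν := by interval_cases ν <;> norm_num <;> nlinarith

theorem isLayering_four {ε : ℝ} (h : 37 / 100 ≤ ε) :
    IsLayering ε 4 (([0, 37 / 100, 59 / 100, 4 / 5] : List ℝ).getD · 1) where
  zero := rfl
  last := rfl
  lt_succ ν hν := by interval_cases ν <;> norm_num
  one_le := by norm_num; linarith
  feasible ν h₁ hν := by interval_cases ν <;> norm_num <;> nlinarith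

theorem isLayering_three {ε : ℝ} (h : 91 / 200 ≤ ε) :
    IsLayering ε 3 (([0, 91 / 200, 18 / 25] : List ℝ).getD · 1) where
  zero := rfl
  last := rfl
  lt_succ ν hν := by interval_cases ν <;> norm_num
  one_le := by norm_num; linarith
  feasible ν h₁ hν := by interval_cases ν <;> norm_num <;> nlinarith

theorem isLayering_two {ε : ℝ} (h : 5 / 8 ≤ ε) (h' : ε < 1) :
    IsLayering ε 2 (([0, ε] : List ℝ).getD · 1) where
  zero := rfl
  last := rfl
  lt_succ ν hν := by interval_cases ν <;> norm_num <;> linarith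
  one_le := le_rfl
  feasible ν h₁ hν := by
    interval_cases ν
    norm_num
    rw [inv_mul_eq_div, le_div_iff₀ (by positivity)]
    nlinarith [mul_nonneg (sub_nonneg.2 h'.le) (by nlinarith : (0 : ℝ) ≤ ε ^ 2 + ε - 1)]

/-- Just above `3/5`, three layers exceed the bound and two layers need `ε² + ε ≥ 1`. -/
theorem bracketingNumberC_two_le_four {ε : ℝ} (h₁ : 3 / 5 ≤ ε) (h₂ : ε ≤ 4 / 5) :
    bracketingNumberC 2 ε ≤ 4 := by
  classical
  refine (bracketingNumberC_le_card (B := {(![0, 0], ![ε, 1]), (![0, 0], ![1, ε]),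
    (![ε, ε], ![1, 4 / 5]), (![ε, 4 / 5], ![1, 1])}) ⟨?_, fun x hx => ?_⟩).trans card_le_four
  · simp only [mem_insert, mem_singleton]
    rintro p (rfl | rfl | rfl | rfl) <;> apply isBracket_vecCons_two <;> nlinarith
  · simp only [mem_insert, mem_singleton, exists_eq_or_imp, exists_eq_left, vecCons_two_le_iff,
      le_vecCons_two_iff]
    simp only [Set.mem_Icc, Pi.le_def, Fin.forall_fin_two, Pi.zero_apply, Pi.one_apply] at hx
    obtain ⟨⟨hx₀, hx₁⟩, hx₀', hx₁'⟩ := hx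
    rcases le_total (x 0) ε with ha | ha
    · exact Or.inl ⟨⟨hx₀, hx₁⟩, ha, hx₁'⟩
    rcases le_total (x 1) ε with hb | hb
    · exact Or.inr <| Or.inl ⟨⟨hx₀, hx₁⟩, hx₀', hb⟩
    rcases le_total (x 1) (4 / 5) with hc | hc
    · exact Or.inr <| Or.inr <| Or.inl ⟨⟨ha, hb⟩, hx₀', hc⟩
    · exact Or.inr <| Or.inr <| Or.inr ⟨⟨ha, hc⟩, hx₀', hx₁'⟩

/-- `(ε⁻¹ - 1) / f(ε)` with `f(ε)` replaced by its majorant `1 + ε/4 + ε²/(8(1-ε))`. -/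
noncomputable def lowerParam (ε : ℝ) : ℝ := (ε⁻¹ - 1) / (1 + ε / 4 + ε ^ 2 / (8 * (1 - ε)))

theorem le_lowerParam_iff {ε w : ℝ} (h₀ : 0 < ε) (h₁ : ε < 1) :
    w ≤ lowerParam ε ↔ w * (ε * (1 - ε) * (1 + ε / 4) + ε ^ 3 / 8) ≤ (1 - ε) ^ 2 := by
  have h₁' : 0 < 1 - ε := sub_pos.2 h₁
  have hD : 0 < ε * (1 - ε) * (1 + ε / 4) + ε ^ 3 / 8 :=
    add_pos (mul_pos (mul_pos h₀ h₁') (by positivity)) (by positivity)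
  have : lowerParam ε = (1 - ε) ^ 2 / (ε * (1 - ε) * (1 + ε / 4) + ε ^ 3 / 8) := by
    rw [lowerParam]
    field_simp
  rw [this, le_div_iff₀ hD]

theorem bracketingNumberC_two_le_of_le_quarter {ε : ℝ} (h₀ : 0 < ε) (h : ε ≤ 1 / 4) :
    (bracketingNumberC 2 ε : ℝ) ≤ bracketingBound (lowerParam ε) := by
  have hK := Nat.ceil_lt_add_one (show 0 ≤ 8 / (5 * ε) by positivity)
  refine (isLayering_uniform h₀ (Nat.le_ceil _)).bracketingNumberC_le ?_
  rw [le_lowerParam_iff h₀ (by linarith)]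
  set K : ℝ := (⌈8 / (5 * ε)⌉₊ : ℝ)
  have hKε : (K - 2) * ε / 2 ≤ 4 / 5 - ε / 2 := by
    have : K * ε < 8 / 5 + ε :=
      calc K * ε < (8 / (5 * ε) + 1) * ε := by gcongr
        _ = 8 / 5 + ε := by field_simp
    linarith
  calc (K - 2) / 2 * (ε * (1 - ε) * (1 + ε / 4) + ε ^ 3 / 8)
      = (K - 2) * ε / 2 * ((1 - ε) * (1 + ε / 4) + ε ^ 2 / 8) := by ring
    _ ≤ (4 / 5 - ε / 2) * ((1 - ε) * (1 + ε / 4) + ε ^ 2 / 8) :=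
        mul_le_mul_of_nonneg_right hKε (by nlinarith)
    _ ≤ (1 - ε) ^ 2 := by nlinarith [mul_nonneg h₀.le (sub_nonneg.2 h)]

theorem bracketingNumberC_two_le_lowerParam {ε : ℝ} (h₀ : 0 < ε) (h₁ : ε < 1) :
    (bracketingNumberC 2 ε : ℝ) ≤ bracketingBound (lowerParam ε) := by
  have hle := fun w => (le_lowerParam_iff (w := w) h₀ h₁).2
  rcases le_or_gt ε (1 / 4) with h25 | h25
  · exact bracketingNumberC_two_le_of_le_quarter h₀ h25
  rcases le_or_gt ε (31 / 100) with h31 | h31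
  · exact (isLayering_six h25.le).bracketingNumberC_le <| hle _ <| by
      nlinarith [mul_nonneg (sub_nonneg.2 h25.le) (sub_nonneg.2 h31)]
  rcases le_or_gt ε (37 / 100) with h37 | h37
  · exact (isLayering_five h31.le).bracketingNumberC_le <| hle _ <| by
      nlinarith [mul_nonneg (sub_nonneg.2 h31.le) (sub_nonneg.2 h37)]
  rcases le_or_gt ε (91 / 200) with h45 | h45
  · exact (isLayering_four h37.le).bracketingNumberC_le <| hle _ <| by
      nlinarith [mul_nonneg (sub_nonneg.2 h37.le) (sub_nonneg.2 h45)]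
  rcases le_or_gt ε (3 / 5) with h60 | h60
  · exact (isLayering_three h45.le).bracketingNumberC_le <| hle _ <| by
      nlinarith [mul_nonneg (sub_nonneg.2 h45.le) (sub_nonneg.2 h60)]
  rcases le_or_gt ε (5 / 8) with h62 | h62
  · calc (bracketingNumberC 2 ε : ℝ) ≤ 4 := by
          exact_mod_cast bracketingNumberC_two_le_four h60.le (by linarith)
      _ ≤ bracketingBound (1 / 5) := by norm_num [bracketingBound]
      _ ≤ bracketingBound (lowerParam ε) := bracketingBound_le_bracketingBound (by norm_num) <|
          hle _ <| by nlinarith [mul_nonneg (sub_nonneg.2 h60.le) (sub_nonneg.2 h62)]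
  · exact (isLayering_two h62.le h₁).bracketingNumberC_le <| hle _ <| by nlinarith

noncomputable def fCoeff (k : ℕ) : ℝ :=
  (∏ m ∈ Icc 1 (k + 1), ((m : ℝ) - 1 / 2)) / (Nat.factorial (k + 2))

theorem fCoeff_zero : fCoeff 0 = 1 / 4 := by
  norm_num [fCoeff, Nat.factorial]

theorem fCoeff_succ (k : ℕ) : fCoeff (k + 1) = fCoeff k * (k + 3 / 2) / (k + 3) := by
  rw [fCoeff, fCoeff, prod_Icc_succ_top (by omega), Nat.factorial_succ]
  push_cast
  generalize ∏ m ∈ Icc 1 (k + 1), ((m : ℝ) - 1 / 2) = P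
  field_simp
  ring

theorem fCoeff_one : fCoeff 1 = 1 / 8 := by
  rw [fCoeff_succ, fCoeff_zero]
  norm_num

theorem fCoeff_nonneg (k : ℕ) : 0 ≤ fCoeff k := by
  induction k with
  | zero => norm_num [fCoeff_zero]
  | succ k ih => rw [fCoeff_succ]; positivity

theorem fCoeff_antitone : Antitone fCoeff :=
  antitone_nat_of_succ_le fun k => by
    rw [fCoeff_succ, div_le_iff₀ (by positivity)]
    nlinarith [fCoeff_nonneg k]

theorem tsum_fCoeff_mul_pow_le {ε : ℝ} (h₀ : 0 ≤ ε) (h₁ : ε < 1) :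
    ∑' k, fCoeff k * ε ^ (k + 1) ≤ ε / 4 + ε ^ 2 / (8 * (1 - ε)) := by
  have hgeom := summable_geometric_of_lt_one h₀ h₁
  have hsum : Summable fun k => fCoeff k * ε ^ (k + 1) :=
    .of_nonneg_of_le (fun k => by have := fCoeff_nonneg k; positivity)
      (fun k => mul_le_mul (fCoeff_antitone k.zero_le) (pow_le_pow_of_le_one h₀ h₁.le k.le_succ)
        (by positivity) (by rw [fCoeff_zero]; norm_num)) (hgeom.mul_left (fCoeff 0))
  have htail : ∑' k, fCoeff (k + 1) * ε ^ (k + 1 + 1) ≤ ∑' k, ε ^ 2 / 8 * ε ^ k := by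
    refine (hsum.comp_injective (add_left_injective 1)).tsum_le_tsum (fun k => ?_)
      (hgeom.mul_left _)
    have h1 : fCoeff (k + 1) ≤ 1 / 8 := (fCoeff_antitone (Nat.le_add_left 1 k)).trans_eq fCoeff_one
    calc fCoeff (k + 1) * ε ^ (k + 1 + 1) ≤ 1 / 8 * ε ^ (k + 1 + 1) := by gcongr
      _ = ε ^ 2 / 8 * ε ^ k := by ring
  rw [tsum_mul_left, tsum_geometric_of_lt_one h₀ h₁, ← div_eq_mul_inv, div_div] at htail
  rw [hsum.tsum_eq_zero_add, fCoeff_zero, zero_add, pow_one]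
  linarith

/-- The improved bound (2.16) for `d = 2`: with
`f(ε) = 1 + ∑_{k=1}^∞ ((∏_{m=1}^k (m - 1/2))/(k+1)!) ε^k`, the bracketing number of the
family `C_2` of anchored boxes in `[0,1]^2` satisfies
`N_[](ε, C_2, ‖·‖_{L¹}) ≤ 2 ((ε⁻¹ - 1)/f(ε) + 3/2) ((ε⁻¹ - 1)/f(ε) + 1)`. -/
theorem bracketingNumberC_two_le_improved (ε : ℝ) (hε : ε ∈ Set.Ioo (0 : ℝ) 1)
    (f : ℝ) (hf : f = 1 + ∑' k : ℕ,
      (∏ m ∈ Icc 1 (k + 1), ((m : ℝ) - 1 / 2)) / (Nat.factorial (k + 2)) * ε ^ (k + 1)) :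
    (bracketingNumberC 2 ε : ℝ) ≤ 2 * ((ε⁻¹ - 1) / f + 3 / 2) * ((ε⁻¹ - 1) / f + 1) := by
  obtain ⟨h₀, h₁⟩ := hε
  change f = 1 + ∑' k, fCoeff k * ε ^ (k + 1) at hf
  have hf₁ : 1 ≤ f := hf ▸ le_add_of_nonneg_right
    (tsum_nonneg fun k => mul_nonneg (fCoeff_nonneg k) (by positivity))
  have hf_le : f ≤ 1 + ε / 4 + ε ^ 2 / (8 * (1 - ε)) := by
    linarith [tsum_fCoeff_mul_pow_le h₀.le h₁]
  have hA₀ : 0 ≤ lowerParam ε := (le_lowerParam_iff h₀ h₁).2 (by rw [zero_mul]; positivity)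
  have hA : lowerParam ε ≤ (ε⁻¹ - 1) / f :=
    div_le_div_of_nonneg_left (sub_nonneg.2 ((one_le_inv₀ h₀).2 h₁.le)) (by linarith) hf_le
  calc (bracketingNumberC 2 ε : ℝ) ≤ bracketingBound (lowerParam ε) :=
        bracketingNumberC_two_le_lowerParam h₀ h₁
    _ ≤ bracketingBound ((ε⁻¹ - 1) / f) := bracketingBound_le_bracketingBound (by linarith) hA
end

section
/- Let d ∈ ℕ with d ≥ 3 and ε ∈ (0,1). Then the minimal cardinality N(ε, C_d, ‖·‖_{L¹}) of a (one-sided) ε-cover of the family C_d of anchored boxes in [0,1]^d satisfies N(ε, C_d, ‖·‖_{L¹}) ≤ 2 · (d^d/d!) · ε^{−d}. -/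
open MeasureTheory

/-- The anchored box `[0, x) = ∏_j [0, x_j)` in `ℝ^d`. -/
def anchoredBox (d : ℕ) (x : Fin d → ℝ) : Set (Fin d → ℝ) :=
  Set.univ.pi fun j => Set.Ico 0 (x j)

/-- Lebesgue measure restricted to the unit cube `[0,1]^d`. -/
noncomputable def cubeMeasure (d : ℕ) : Measure (Fin d → ℝ) :=
  volume.restrict (Set.Icc (0 : Fin d → ℝ) 1)

/-- `Γ` is a (one-sided) `ε`-cover of the family `C_d` of anchored boxes in `[0,1]^d`:
a finite set of integrable functions on `[0,1]^d` such that for every `x ∈ [0,1]^d` there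
are `ℓ, u ∈ Γ` with `ℓ ≤ 1_{[0,x)} ≤ u` pointwise on `[0,1]^d` and `∫ (u - ℓ) dλ^d ≤ ε`. -/
def IsDeltaCoverC (d : ℕ) (ε : ℝ) (Γ : Finset ((Fin d → ℝ) → ℝ)) : Prop :=
  (∀ g ∈ Γ, Integrable g (cubeMeasure d)) ∧
  ∀ x ∈ Set.Icc (0 : Fin d → ℝ) 1, ∃ l ∈ Γ, ∃ u ∈ Γ,
    (∀ t ∈ Set.Icc (0 : Fin d → ℝ) 1,
      l t ≤ (anchoredBox d x).indicator (fun _ => (1 : ℝ)) t ∧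
      (anchoredBox d x).indicator (fun _ => (1 : ℝ)) t ≤ u t) ∧
    ∫ t, (u t - l t) ∂(cubeMeasure d) ≤ ε

/-- The minimal cardinality `N(ε, C_d, ‖·‖_{L¹})` of a (one-sided) `ε`-cover of `C_d`. -/
noncomputable def deltaCoverNumberC (d : ℕ) (ε : ℝ) : ℕ :=
  sInf { n : ℕ | ∃ Γ : Finset ((Fin d → ℝ) → ℝ), IsDeltaCoverC d ε Γ ∧ Γ.card = n }

/-! The cover is built on the levels `γ_k = 1 - k ε / d`, `k ≤ N = ⌈d/ε - d⌉`. A path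
`0 = s₀ ≤ s₁ ≤ ⋯ ≤ s_d ≤ N` gives the upper box with sides `γ_{s_{j+1}} / γ_{s_j}`, whose volume
telescopes to `γ_{s_d}`, and the lower box with sides `γ_{s_{j+1}+1} / γ_{s_j}`; coordinate `j`
costs exactly `ε / d` of volume, so the two differ by at most `ε`. When `s_d = N` the lower
bracket is `0` instead, and `γ_N ≤ ε`. Every `x ∈ [0,1]^d` is bracketed by the greedy path, with
`s_{j+1}` the largest index such that `γ_{s_j} x_j ≤ γ_{s_{j+1}}`. Paths are monotone `d`-tuples
in `{0, …, N}`, so there are `C(N + d, d) ≤ (d/ε)^d / d!` of them, the inequality using `d ≥ 3`. -/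

open Finset
open scoped Nat

theorem Finset.eq_mul_prod_range_div₀ {G₀ : Type*} [CommGroupWithZero G₀] (f : ℕ → G₀) {n : ℕ}
    (hf : ∀ k < n, f k ≠ 0) : f n = f 0 * ∏ k ∈ range n, f (k + 1) / f k := by
  induction n with
  | zero => simp
  | succ n ih =>
    rw [prod_range_succ, ← mul_assoc, ← ih fun k hk => hf k (by omega),
      mul_div_cancel₀ _ (hf n n.lt_succ_self)]

theorem Finset.prod_range_sub_prod_range_le {R : Type*} [CommRing R] [LinearOrder R]
    [IsStrictOrderedRing R] {a b : ℕ → R} {n : ℕ} (ha : ∀ i < n, 0 ≤ a i)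
    (hab : ∀ i < n, a i ≤ b i) (ha1 : ∀ i < n, a i ≤ 1) :
    ∏ i ∈ range n, b i - ∏ i ∈ range n, a i ≤
      ∑ j ∈ range n, (b j - a j) * ∏ i ∈ range j, b i := by
  induction n with
  | zero => simp
  | succ n ih =>
    have hAB : ∏ i ∈ range n, a i ≤ ∏ i ∈ range n, b i :=
      prod_le_prod (fun i hi => ha i (by simp at hi; omega))
        fun i hi => hab i (by simp at hi; omega)
    have := ih (fun i hi => ha i (by omega)) (fun i hi => hab i (by omega))
      fun i hi => ha1 i (by omega)
    rw [prod_range_succ, prod_range_succ, sum_range_succ]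
    -- `B b - A a = B (b - a) + (B - A) a` and `a ≤ 1`
    nlinarith [mul_le_mul_of_nonneg_left (ha1 n (by omega)) (sub_nonneg.2 hAB), ha n (by omega)]

theorem Nat.succ_descFactorial_le_pow (n : ℕ) {k : ℕ} (hk : 3 ≤ k) :
    (n + 1).descFactorial k ≤ n ^ k := by
  induction k, hk using Nat.le_induction with
  | base =>
    rcases n with _ | m
    · simp [Nat.descFactorial]
    · simp only [Nat.descFactorial, show m + 1 + 1 - 2 = m by omega, Nat.add_sub_cancel,
        Nat.sub_zero, mul_one]
      nlinarith [sq_nonneg m]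
  | succ k hk ih =>
    rw [Nat.descFactorial_succ, pow_succ, mul_comm]
    exact Nat.mul_le_mul ih (by omega)

theorem Nat.cast_succ_choose_le {n k : ℕ} (hk : 3 ≤ k) {x : ℝ} (hnx : (n : ℝ) ≤ x) :
    ((n + 1).choose k : ℝ) ≤ x ^ k / k ! := by
  rw [le_div_iff₀ (by positivity)]
  calc ((n + 1).choose k : ℝ) * k ! = (n + 1).descFactorial k := by
        rw [Nat.descFactorial_eq_factorial_mul_choose]; push_cast; ring
    _ ≤ (n : ℝ) ^ k := by exact_mod_cast Nat.succ_descFactorial_le_pow n hk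
    _ ≤ x ^ k := by gcongr

open Classical in
def monotoneTuples (d N : ℕ) : Finset (Fin d → ℕ) :=
  {σ ∈ Fintype.piFinset fun _ => range (N + 1) | Monotone σ}

theorem mem_monotoneTuples {d N : ℕ} {σ : Fin d → ℕ} :
    σ ∈ monotoneTuples d N ↔ (∀ l, σ l ≤ N) ∧ Monotone σ := by
  simp [monotoneTuples]

theorem card_monotoneTuples_le (d N : ℕ) : #(monotoneTuples d N) ≤ (N + d).choose d := by
  classical
  -- shifting the `l`-th entry by `l` makes a monotone tuple strictly monotone
  have hshift : ∀ σ ∈ monotoneTuples d N, StrictMono fun l : Fin d => σ l + l := by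
    intro σ hσ l l' hl
    have := (mem_monotoneTuples.1 hσ).2 hl.le
    simp only; omega
  have hcard : ∀ σ ∈ monotoneTuples d N, #(univ.image fun l : Fin d => σ l + l) = d := by
    intro σ hσ
    rw [card_image_of_injective _ (hshift σ hσ).injective, card_univ, Fintype.card_fin]
  calc #(monotoneTuples d N)
      ≤ #((range (N + d)).powersetCard d) := by
        refine card_le_card_of_injOn (fun σ => univ.image fun l : Fin d => σ l + l) ?_ ?_
        · intro σ hσ
          refine mem_powersetCard.2 ⟨fun m hm => ?_, hcard σ hσ⟩
          obtain ⟨l, -, rfl⟩ := mem_image.1 hm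
          have := (mem_monotoneTuples.1 hσ).1 l
          simp only [mem_range]; omega
        · intro σ hσ τ hτ h
          have hrange : Set.range (fun l : Fin d => σ l + l) = Set.range fun l => τ l + l := by
            simpa [coe_image] using congrArg ((↑) : Finset ℕ → Set ℕ) h
          funext l
          have := congrFun (((hshift σ hσ).range_inj (hshift τ hτ)).1 hrange) l
          simpa using this
    _ = (N + d).choose d := by rw [card_powersetCard, card_range]

theorem measurableSet_anchoredBox (d : ℕ) (y : Fin d → ℝ) : MeasurableSet (anchoredBox d y) :=
  .univ_pi fun _ => measurableSet_Ico

theorem anchoredBox_mono (d : ℕ) : Monotone (anchoredBox d) :=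
  fun _ _ h _ ht j hj => ⟨(ht j hj).1, (ht j hj).2.trans_le (h j)⟩

theorem indicator_anchoredBox_le_indicator {d : ℕ} {y y' : Fin d → ℝ} (h : y ≤ y') :
    (anchoredBox d y).indicator (fun _ => (1 : ℝ)) ≤ (anchoredBox d y').indicator fun _ => 1 :=
  Set.indicator_le_indicator_of_subset (anchoredBox_mono d h) fun _ => zero_le_one

instance (d : ℕ) : IsFiniteMeasure (cubeMeasure d) :=
  isFiniteMeasure_restrict.2 isCompact_Icc.measure_ne_top

theorem integrable_indicator_anchoredBox (d : ℕ) (y : Fin d → ℝ) :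
    Integrable ((anchoredBox d y).indicator fun _ => (1 : ℝ)) (cubeMeasure d) :=
  (integrable_const 1).indicator (measurableSet_anchoredBox d y)

theorem integral_indicator_anchoredBox {d : ℕ} {y : Fin d → ℝ} (h0 : 0 ≤ y) (h1 : y ≤ 1) :
    ∫ t, (anchoredBox d y).indicator (fun _ => (1 : ℝ)) t ∂cubeMeasure d = ∏ j, y j := by
  have hsub : anchoredBox d y ⊆ Set.Icc 0 1 := fun t ht =>
    ⟨fun j => (ht j trivial).1, fun j => ((ht j trivial).2.trans_le (h1 j)).le⟩
  rw [integral_indicator_const _ (measurableSet_anchoredBox d y), smul_eq_mul, mul_one,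
    measureReal_def, cubeMeasure,
    Measure.restrict_apply (measurableSet_anchoredBox d y), Set.inter_eq_self_of_subset_left hsub,
    anchoredBox]
  simpa using Real.volume_pi_Ico_toReal h0

namespace AnchoredBoxCover

noncomputable def level (δ : ℝ) (k : ℕ) : ℝ := 1 - k * δ

section Level

variable {δ : ℝ} {N : ℕ}

theorem level_zero (δ : ℝ) : level δ 0 = 1 := by simp [level]

theorem level_sub_level_succ (δ : ℝ) (k : ℕ) : level δ k - level δ (k + 1) = δ := by
  simp only [level]; push_cast; ring

theorem level_antitone (hδ : 0 ≤ δ) : Antitone (level δ) := fun k m h => by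
  unfold level; gcongr

theorem level_pos (hδ : 0 ≤ δ) (hN : 0 < level δ N) {k : ℕ} (hk : k ≤ N) : 0 < level δ k :=
  hN.trans_le (level_antitone hδ hk)

end Level

structure IsGridPath (d N : ℕ) (s : ℕ → ℕ) : Prop where
  zero : s 0 = 0
  mono : Monotone s
  last_le : s d ≤ N

noncomputable def upperRatio (δ : ℝ) (s : ℕ → ℕ) (k : ℕ) : ℝ :=
  level δ (s (k + 1)) / level δ (s k)

noncomputable def lowerRatio (δ : ℝ) (s : ℕ → ℕ) (k : ℕ) : ℝ :=
  level δ (s (k + 1) + 1) / level δ (s k)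

noncomputable def upperBracket (d : ℕ) (δ : ℝ) (s : ℕ → ℕ) : (Fin d → ℝ) → ℝ :=
  (anchoredBox d fun j => upperRatio δ s j).indicator fun _ => 1

noncomputable def lowerBracket (d N : ℕ) (δ : ℝ) (s : ℕ → ℕ) : (Fin d → ℝ) → ℝ :=
  if s d < N then (anchoredBox d fun j => lowerRatio δ s j).indicator fun _ => 1 else 0

theorem integrable_upperBracket (d : ℕ) (δ : ℝ) (s : ℕ → ℕ) :
    Integrable (upperBracket d δ s) (cubeMeasure d) :=
  integrable_indicator_anchoredBox d _

theorem integrable_lowerBracket (d N : ℕ) (δ : ℝ) (s : ℕ → ℕ) :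
    Integrable (lowerBracket d N δ s) (cubeMeasure d) := by
  unfold lowerBracket
  split_ifs
  exacts [integrable_indicator_anchoredBox d _, integrable_zero _ _ _]

section Volume

variable {d N : ℕ} {δ : ℝ} {s : ℕ → ℕ} (hδ : 0 ≤ δ) (hN : 0 < level δ N) (hs : IsGridPath d N s)
include hδ hN hs

theorem level_path_pos {k : ℕ} (hk : k ≤ d) : 0 < level δ (s k) :=
  level_pos hδ hN ((hs.mono hk).trans hs.last_le)

theorem upperRatio_mem_Ioc {k : ℕ} (hk : k < d) : upperRatio δ s k ∈ Set.Ioc 0 1 := by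
  have hpos := level_path_pos hδ hN hs hk.le
  exact ⟨div_pos (level_path_pos hδ hN hs hk) hpos,
    (div_le_one hpos).2 (level_antitone hδ (hs.mono k.le_succ))⟩

theorem level_path_eq_prod_upperRatio {n : ℕ} (hn : n ≤ d) :
    level δ (s n) = ∏ k ∈ range n, upperRatio δ s k := by
  simpa only [upperRatio, hs.zero, level_zero, one_mul] using Finset.eq_mul_prod_range_div₀
    (fun k => level δ (s k)) fun k hk => (level_path_pos hδ hN hs (hk.le.trans hn)).ne'

theorem integral_upperBracket : ∫ t, upperBracket d δ s t ∂cubeMeasure d = level δ (s d) := by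
  rw [upperBracket, level_path_eq_prod_upperRatio hδ hN hs le_rfl,
    integral_indicator_anchoredBox (fun j => (upperRatio_mem_Ioc hδ hN hs j.2).1.le)
      (fun j => (upperRatio_mem_Ioc hδ hN hs j.2).2),
    Fin.prod_univ_eq_prod_range (upperRatio δ s)]

theorem integral_upperBracket_sub_lowerBracket_of_lt (hlt : s d < N) :
    ∫ t, upperBracket d δ s t ∂cubeMeasure d - ∫ t, lowerBracket d N δ s t ∂cubeMeasure d
      ≤ d * δ := by
  have hlevel : ∀ k < d, 0 < level δ (s (k + 1) + 1) := fun k hk =>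
    level_pos hδ hN (Nat.succ_le_of_lt ((hs.mono hk).trans_lt hlt))
  have hlow : ∀ k < d, lowerRatio δ s k ∈ Set.Icc 0 (upperRatio δ s k) := fun k hk =>
    ⟨(div_pos (hlevel k hk) (level_path_pos hδ hN hs hk.le)).le,
      div_le_div_of_nonneg_right (level_antitone hδ (s (k + 1)).le_succ)
        (level_path_pos hδ hN hs hk.le).le⟩
  have hupper1 : ∀ k < d, upperRatio δ s k ≤ 1 := fun k hk => (upperRatio_mem_Ioc hδ hN hs hk).2
  rw [integral_upperBracket hδ hN hs, lowerBracket, if_pos hlt,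
    integral_indicator_anchoredBox (fun j => (hlow j j.2).1)
      (fun j => (hlow j j.2).2.trans (hupper1 j j.2)),
    Fin.prod_univ_eq_prod_range (lowerRatio δ s), level_path_eq_prod_upperRatio hδ hN hs le_rfl]
  calc ∏ k ∈ range d, upperRatio δ s k - ∏ k ∈ range d, lowerRatio δ s k
      ≤ ∑ j ∈ range d, (upperRatio δ s j - lowerRatio δ s j) * ∏ i ∈ range j, upperRatio δ s i :=
        prod_range_sub_prod_range_le (fun k hk => (hlow k hk).1) (fun k hk => (hlow k hk).2)
          fun k hk => (hlow k hk).2.trans (hupper1 k hk)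
    _ = ∑ _j ∈ range d, δ := sum_congr rfl fun j hj => by
        have hj := (mem_range.1 hj).le
        rw [← level_path_eq_prod_upperRatio hδ hN hs hj, upperRatio, lowerRatio, ← sub_div,
          level_sub_level_succ, div_mul_cancel₀ _ (level_path_pos hδ hN hs hj).ne']
    _ = d * δ := by simp

theorem integral_upperBracket_sub_lowerBracket_le {ε : ℝ} (hdδ : d * δ ≤ ε)
    (hNε : level δ N ≤ ε) :
    ∫ t, (upperBracket d δ s t - lowerBracket d N δ s t) ∂cubeMeasure d ≤ ε := by
  rw [integral_sub (integrable_upperBracket d δ s) (integrable_lowerBracket d N δ s)]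
  by_cases hlt : s d < N
  · exact (integral_upperBracket_sub_lowerBracket_of_lt hδ hN hs hlt).trans hdδ
  · rw [integral_upperBracket hδ hN hs, lowerBracket, if_neg hlt,
      le_antisymm hs.last_le (not_lt.1 hlt)]
    simpa using hNε

end Volume

noncomputable def pathOfTuple {d : ℕ} (N : ℕ) (σ : Fin d → ℕ) : ℕ → ℕ
  | 0 => 0
  | k + 1 => if h : k < d then σ ⟨k, h⟩ else N

theorem isGridPath_pathOfTuple {d N : ℕ} {σ : Fin d → ℕ} (hσ : σ ∈ monotoneTuples d N) :
    IsGridPath d N (pathOfTuple N σ) := by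
  obtain ⟨hσN, hσ⟩ := mem_monotoneTuples.1 hσ
  refine ⟨rfl, monotone_nat_of_le_succ fun k => ?_, ?_⟩
  · rcases k with _ | k
    · exact Nat.zero_le _
    · simp only [pathOfTuple]
      split_ifs with h h' h'
      exacts [hσ (Fin.mk_le_mk.2 k.le_succ), hσN _, by omega, le_rfl]
  · rcases d with _ | d
    · exact Nat.zero_le _
    · simpa [pathOfTuple] using hσN _

open Classical in
noncomputable def bracketCover (d N : ℕ) (δ : ℝ) : Finset ((Fin d → ℝ) → ℝ) :=
  (monotoneTuples d N).image (fun σ => upperBracket d δ (pathOfTuple N σ)) ∪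
    (monotoneTuples d N).image fun σ => lowerBracket d N δ (pathOfTuple N σ)

theorem card_bracketCover_le (d N : ℕ) (δ : ℝ) :
    #(bracketCover d N δ) ≤ 2 * (N + d).choose d := by
  classical
  calc #(bracketCover d N δ) ≤ #(monotoneTuples d N) + #(monotoneTuples d N) :=
        (card_union_le _ _).trans (add_le_add card_image_le card_image_le)
    _ ≤ 2 * (N + d).choose d := by have := card_monotoneTuples_le d N; omega

noncomputable def nextIndex (δ : ℝ) (N : ℕ) (y : ℝ) : ℕ :=
  Nat.findGreatest (fun m => y ≤ level δ m) N

section NextIndex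

variable {δ : ℝ} {N k : ℕ} {y : ℝ}

theorem nextIndex_le : nextIndex δ N y ≤ N := Nat.findGreatest_le N

theorem le_nextIndex (hk : k ≤ N) (hy : y ≤ level δ k) : k ≤ nextIndex δ N y :=
  Nat.le_findGreatest hk hy

theorem le_level_nextIndex (hk : k ≤ N) (hy : y ≤ level δ k) : y ≤ level δ (nextIndex δ N y) :=
  Nat.findGreatest_spec (P := fun m => y ≤ level δ m) hk hy

theorem level_nextIndex_succ_lt (h : nextIndex δ N y < N) : level δ (nextIndex δ N y + 1) < y :=
  not_le.1 (Nat.findGreatest_is_greatest (P := fun m => y ≤ level δ m) (Nat.lt_succ_self _) h)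

end NextIndex

noncomputable def greedyPath {d : ℕ} (δ : ℝ) (N : ℕ) (x : Fin d → ℝ) : ℕ → ℕ
  | 0 => 0
  | j + 1 => if h : j < d then nextIndex δ N (level δ (greedyPath δ N x j) * x ⟨j, h⟩) else N

section Greedy

variable {d N : ℕ} {δ : ℝ} {x : Fin d → ℝ}

theorem greedyPath_le (j : ℕ) : greedyPath δ N x j ≤ N := by
  cases j with
  | zero => exact Nat.zero_le _
  | succ j =>
    simp only [greedyPath]
    split_ifs
    exacts [nextIndex_le, le_rfl]

theorem greedyPath_succ (j : Fin d) :
    greedyPath δ N x (j + 1) = nextIndex δ N (level δ (greedyPath δ N x j) * x j) := by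
  simp [greedyPath, j.2]

theorem pathOfTuple_greedyPath :
    pathOfTuple N (fun l : Fin d => greedyPath δ N x (l + 1)) = greedyPath δ N x := by
  funext k
  cases k with
  | zero => rfl
  | succ k => by_cases h : k < d <;> simp [pathOfTuple, greedyPath, h]

variable (hδ : 0 ≤ δ) (hN : 0 < level δ N) (hx : x ≤ 1)
include hδ hN hx

theorem level_greedyPath_mul_le (j : Fin d) :
    level δ (greedyPath δ N x j) * x j ≤ level δ (greedyPath δ N x j) :=
  mul_le_of_le_one_right (level_pos hδ hN (greedyPath_le _)).le (hx j)

theorem isGridPath_greedyPath : IsGridPath d N (greedyPath δ N x) := by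
  refine ⟨rfl, monotone_nat_of_le_succ fun j => ?_, greedyPath_le d⟩
  by_cases h : j < d
  · rw [show j = (⟨j, h⟩ : Fin d) from rfl, greedyPath_succ]
    exact le_nextIndex (greedyPath_le j) (level_greedyPath_mul_le hδ hN hx _)
  · simp [greedyPath, h, greedyPath_le]

theorem indicator_le_upperBracket_greedyPath :
    (anchoredBox d x).indicator (fun _ => 1) ≤ upperBracket d δ (greedyPath δ N x) := by
  refine indicator_anchoredBox_le_indicator fun j => ?_
  rw [upperRatio, le_div_iff₀ (level_pos hδ hN (greedyPath_le _)), mul_comm, greedyPath_succ]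
  exact le_level_nextIndex (greedyPath_le j) (level_greedyPath_mul_le hδ hN hx j)

theorem lowerBracket_greedyPath_le_indicator :
    lowerBracket d N δ (greedyPath δ N x) ≤ (anchoredBox d x).indicator fun _ => 1 := by
  rw [lowerBracket]
  split_ifs with hlt
  · refine indicator_anchoredBox_le_indicator fun j => ?_
    have hj : nextIndex δ N (level δ (greedyPath δ N x j) * x j) < N := by
      rw [← greedyPath_succ]
      exact ((isGridPath_greedyPath hδ hN hx).mono j.2).trans_lt hlt
    rw [lowerRatio, div_le_iff₀ (level_pos hδ hN (greedyPath_le _)), mul_comm, greedyPath_succ]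
    exact (level_nextIndex_succ_lt hj).le
  · exact fun t => Set.indicator_nonneg (fun _ _ => zero_le_one) t

end Greedy

theorem isDeltaCoverC_bracketCover {d N : ℕ} {δ ε : ℝ} (hδ : 0 ≤ δ) (hN : 0 < level δ N)
    (hdδ : d * δ ≤ ε) (hNε : level δ N ≤ ε) : IsDeltaCoverC d ε (bracketCover d N δ) := by
  classical
  refine ⟨fun g hg => ?_, fun x hx => ?_⟩
  · rcases mem_union.1 hg with hg | hg <;> obtain ⟨σ, -, rfl⟩ := mem_image.1 hg
    exacts [integrable_upperBracket d δ _, integrable_lowerBracket d N δ _]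
  · replace hx := hx.2
    have hσ : (fun l : Fin d => greedyPath δ N x (l + 1)) ∈ monotoneTuples d N :=
      mem_monotoneTuples.2 ⟨fun l => greedyPath_le _,
        fun l l' h => (isGridPath_greedyPath hδ hN hx).mono (Nat.succ_le_succ h)⟩
    refine ⟨lowerBracket d N δ (greedyPath δ N x), ?_, upperBracket d δ (greedyPath δ N x), ?_,
      fun t _ => ⟨lowerBracket_greedyPath_le_indicator hδ hN hx t,
        indicator_le_upperBracket_greedyPath hδ hN hx t⟩,
      integral_upperBracket_sub_lowerBracket_le hδ hN (isGridPath_greedyPath hδ hN hx) hdδ hNε⟩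
    · exact mem_union_right _ (mem_image.2 ⟨_, hσ, by rw [pathOfTuple_greedyPath]⟩)
    · exact mem_union_left _ (mem_image.2 ⟨_, hσ, by rw [pathOfTuple_greedyPath]⟩)

theorem level_ceil_mem_Ioc {d : ℕ} (hd : 1 ≤ d) {ε : ℝ} (hε : ε ∈ Set.Ioo 0 1) :
    level (ε / d) ⌈d / ε - d⌉₊ ∈ Set.Ioc 0 ε := by
  obtain ⟨hε0, hε1⟩ := hε
  have hd0 : (0 : ℝ) < d := by exact_mod_cast hd
  have hd1 : (1 : ℝ) ≤ d := by exact_mod_cast hd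
  have hceil_ge : (d / ε - d) * (ε / d) ≤ ⌈d / ε - d⌉₊ * (ε / d) := by
    gcongr; exact Nat.le_ceil _
  have hceil_lt : ⌈d / ε - d⌉₊ * (ε / d) < (d / ε - d + 1) * (ε / d) := by
    gcongr
    exact Nat.ceil_lt_add_one (sub_nonneg.2 (le_div_self hd0.le hε0 hε1.le))
  have hexpand : (d / ε - d) * (ε / d) = 1 - ε := by field_simp
  have hεd : ε / d ≤ ε := div_le_self hε0.le hd1
  unfold level
  constructor <;> nlinarith

end AnchoredBoxCover

/-- For `d ≥ 3` and `ε ∈ (0,1)`, the minimal cardinality of a one-sided `ε`-cover of the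
family `C_d` of anchored boxes in `[0,1]^d` satisfies
`N(ε, C_d, ‖·‖_{L¹}) ≤ 2 (d^d/d!) ε^{-d}`. -/
theorem deltaCoverNumberC_le (d : ℕ) (hd : 3 ≤ d) (ε : ℝ) (hε : ε ∈ Set.Ioo (0 : ℝ) 1) :
    (deltaCoverNumberC d ε : ℝ) ≤ 2 * ((d : ℝ) ^ d / (Nat.factorial d)) * (1 / ε) ^ d := by
  set N := ⌈d / ε - d⌉₊
  set Γ := AnchoredBoxCover.bracketCover d N (ε / d)
  have hd0 : (0 : ℝ) < d := by positivity
  obtain ⟨hpos, hle⟩ := AnchoredBoxCover.level_ceil_mem_Ioc (d := d) (by omega) hε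
  have hcover : IsDeltaCoverC d ε Γ := AnchoredBoxCover.isDeltaCoverC_bracketCover
    (div_pos hε.1 hd0).le hpos (by rw [mul_div_cancel₀ _ hd0.ne']) hle
  have hN : ((N + (d - 1) : ℕ) : ℝ) ≤ d / ε := by
    have := Nat.ceil_lt_add_one (a := d / ε - d)
      (sub_nonneg.2 (le_div_self hd0.le hε.1 hε.2.le))
    push_cast [Nat.cast_sub (by omega : 1 ≤ d)]
    linarith
  have hmin : deltaCoverNumberC d ε ≤ #Γ := Nat.sInf_le ⟨_, hcover, rfl⟩
  calc (deltaCoverNumberC d ε : ℝ) ≤ #Γ := by exact_mod_cast hmin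
    _ ≤ 2 * ((N + d).choose d : ℝ) := by
        exact_mod_cast AnchoredBoxCover.card_bracketCover_le d N _
    _ ≤ 2 * ((d / ε) ^ d / d !) := by
        rw [show N + d = N + (d - 1) + 1 by omega]
        gcongr
        exact Nat.cast_succ_choose_le hd hN
    _ = 2 * ((d : ℝ) ^ d / d !) * (1 / ε) ^ d := by rw [div_pow, one_div_pow]; ring
end
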